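/- arXiv:2506.00567 — 3 statements merged into one kernel-verified Lean document; each statement's English description precedes it below -/
import Mathlib

section
/- Let H be a complex Hilbert space, S a pure bounded isometry on H, and W = (range S)ᗮ its wandering subspace. Let N be a closed subspace of H invariant under S* (i.e., S*(N) ⊆ N), let P_N be the orthogonal projection onto N, and let A_N = P_N ∘ S restricted to N (the compression of S to N). If (g_i)_{i∈I} is a family of vectors of W with A‖f‖² ≤ ∑_{i∈I} |⟨f, g_i⟩|² ≤ B‖f‖² for all f ∈ W (for constants A, B > 0), then {A_Nⁿ (P_N g_i) : i ∈ I, n ≥ 0} is a frame of N with bounds A, B, i.e., A‖f‖² ≤ ∑_{i∈I, n≥0} |⟨f, A_Nⁿ P_N g_i⟩|² ≤ B‖f‖² for all f ∈ N. -/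
/-!
Since `N` is `S*`-invariant, the adjoint of the compression `A_N` is the restriction of `S*`
to `N`, so `⟪f, A_Nⁿ (P_N g)⟫ = ⟪S*ⁿ f, g⟫`, and for `g ∈ W` this is `⟪P_W (S*ⁿ f), g⟫`.
For an isometry `‖S* y‖ = ‖P_{range S} y‖`, hence `‖y‖² = ‖P_W y‖² + ‖S* y‖²`; telescoping along
`y = S*ⁿ f` and using that `‖S*ⁿ f‖ = ‖P_{range Sⁿ} f‖ → 0` when `S` is pure gives the Wold
identity `∑ₙ ‖P_W (S*ⁿ f)‖² = ‖f‖²`. The frame bounds of `(gᵢ)` applied to each `P_W (S*ⁿ f)`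
then sum up to the frame bounds for `f`.
-/

open scoped InnerProductSpace
open ContinuousLinearMap Filter Topology

section Isometry

variable {𝕜 E F : Type*} [RCLike 𝕜] [NormedAddCommGroup E] [InnerProductSpace 𝕜 E]
  [CompleteSpace E] [NormedAddCommGroup F] [InnerProductSpace 𝕜 F] [CompleteSpace F]
  {T : E →L[𝕜] F}

lemma hasOrthogonalProjection_range_of_norm_map (hT : ∀ x, ‖T x‖ = ‖x‖) :
    T.range.HasOrthogonalProjection :=
  have : CompleteSpace T.range :=
    (AddMonoidHomClass.isometry_of_norm T hT).isClosedEmbedding.isClosed_range.completeSpace_coe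
  inferInstance

lemma adjoint_apply_apply_of_norm_map (hT : ∀ x, ‖T x‖ = ‖x‖) (y : E) : adjoint T (T y) = y :=
  congr($((norm_map_iff_adjoint_comp_self T).1 hT) y)

lemma norm_adjoint_apply_of_norm_map (hT : ∀ x, ‖T x‖ = ‖x‖)
    [T.range.HasOrthogonalProjection] (x : F) :
    ‖adjoint T x‖ = ‖T.range.starProjection x‖ := by
  obtain ⟨y, hy : T y = _⟩ := T.range.starProjection_apply_mem x
  have hker : adjoint T (x - T.range.starProjection x) = 0 := by
    simpa [orthogonal_range] using T.range.sub_starProjection_mem_orthogonal x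
  rw [map_sub, sub_eq_zero, ← hy, adjoint_apply_apply_of_norm_map hT] at hker
  rw [hker, ← hy, hT]

end Isometry

lemma Submodule.tendsto_starProjection_zero_of_antitone {𝕜 E ι : Type*} [RCLike 𝕜]
    [NormedAddCommGroup E] [InnerProductSpace 𝕜 E] [CompleteSpace E] [Preorder ι]
    {K : ι → Submodule 𝕜 E} [∀ i, (K i).HasOrthogonalProjection] (hK : Antitone K)
    (hbot : ⨅ i, K i = ⊥) (x : E) :
    Tendsto (fun i => (K i).starProjection x) atTop (𝓝 0) := by
  have hdense : ⊤ ≤ (⨆ i, (K i)ᗮ).topologicalClosure := by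
    rw [← Submodule.orthogonal_orthogonal_eq_closure, ← Submodule.iInf_orthogonal]
    simp [Submodule.orthogonal_orthogonal, hbot]
  have := Submodule.starProjection_tendsto_self (fun i => (K i)ᗮ)
    (fun _ _ h => Submodule.orthogonal_le (hK h)) x hdense
  simpa [Submodule.starProjection_orthogonal_val] using (tendsto_const_nhds (x := x)).sub this

lemma hasSum_sub_succ_of_antitone {a : ℕ → ℝ} (ha : Antitone a)
    (h : Tendsto a atTop (𝓝 0)) : HasSum (fun n => a n - a (n + 1)) (a 0) := by
  rw [hasSum_iff_tendsto_nat_of_nonneg fun n => sub_nonneg.2 (ha n.le_succ)]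
  simpa only [Finset.sum_range_sub', sub_zero] using (tendsto_const_nhds (x := a 0)).sub h

section PureIsometry

variable {𝕜 H : Type*} [RCLike 𝕜] [NormedAddCommGroup H] [InnerProductSpace 𝕜 H]
  {S : H →L[𝕜] H}

lemma norm_pow_apply_of_norm_map (hS : ∀ x, ‖S x‖ = ‖x‖) (n : ℕ) (x : H) :
    ‖(S ^ n) x‖ = ‖x‖ := by
  induction n with
  | zero => simp
  | succ n ih => rw [pow_succ', mul_apply_eq_comp, hS, ih]

lemma antitone_range_pow (S : H →L[𝕜] H) : Antitone fun n : ℕ => (S ^ n).range := by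
  intro n m hnm
  obtain ⟨k, rfl⟩ := Nat.exists_eq_add_of_le hnm
  rintro _ ⟨y, rfl⟩
  exact ⟨(S ^ k) y, by rw [pow_add, coe_coe, coe_coe, mul_apply_eq_comp]⟩

variable [CompleteSpace H]

lemma tendsto_norm_adjoint_pow_apply_of_pure (hS : ∀ x, ‖S x‖ = ‖x‖)
    (hpure : ⋂ n : ℕ, Set.range (S ^ n) = {0}) (x : H) :
    Tendsto (fun n => ‖(adjoint S ^ n) x‖) atTop (𝓝 0) := by
  have := fun n => hasOrthogonalProjection_range_of_norm_map (norm_pow_apply_of_norm_map hS n)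
  have hbot : ⨅ n : ℕ, (S ^ n).range = ⊥ := by
    refine (Submodule.eq_bot_iff _).2 fun y hy => ?_
    have : y ∈ ⋂ n : ℕ, Set.range (S ^ n) := Set.mem_iInter.2 (Submodule.mem_iInf _ |>.1 hy)
    rwa [hpure] at this
  have hadj : ∀ n, adjoint S ^ n = adjoint (S ^ n) := fun n => by
    simp only [← star_eq_adjoint, star_pow]
  simp_rw [hadj, norm_adjoint_apply_of_norm_map (norm_pow_apply_of_norm_map hS _)]
  simpa using ((Submodule.tendsto_starProjection_zero_of_antitone (antitone_range_pow S)
    hbot x).norm)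

lemma hasSum_norm_sq_starProjection_wandering (hS : ∀ x, ‖S x‖ = ‖x‖)
    (hpure : ⋂ n : ℕ, Set.range (S ^ n) = {0}) (x : H) :
    HasSum (fun n => ‖S.rangeᗮ.starProjection ((adjoint S ^ n) x)‖ ^ 2) (‖x‖ ^ 2) := by
  have := hasOrthogonalProjection_range_of_norm_map hS
  set a : ℕ → ℝ := fun n => ‖(adjoint S ^ n) x‖ ^ 2
  have hstep : ∀ n, a n - a (n + 1) = ‖S.rangeᗮ.starProjection ((adjoint S ^ n) x)‖ ^ 2 := by
    intro n
    change ‖_‖ ^ 2 - ‖_‖ ^ 2 = _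
    rw [pow_succ' (adjoint S) n, mul_apply_eq_comp, norm_adjoint_apply_of_norm_map hS,
      Submodule.norm_sq_eq_add_norm_sq_projection ((adjoint S ^ n) x) S.range]
    simp only [Submodule.starProjection_apply, Submodule.coe_norm]
    ring
  have ha : Antitone a := antitone_nat_of_succ_le fun n => sub_nonneg.1 (by rw [hstep]; positivity)
  have hlim : Tendsto a atTop (𝓝 0) := by
    simpa only [zero_pow two_ne_zero]
      using (tendsto_norm_adjoint_pow_apply_of_pure hS hpure x).pow 2
  simpa only [hstep, a, pow_zero, one_apply_eq_self] using hasSum_sub_succ_of_antitone ha hlim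

end PureIsometry

section Compression

variable {𝕜 E : Type*} [RCLike 𝕜] [NormedAddCommGroup E] [InnerProductSpace 𝕜 E]
  [CompleteSpace E] {S : E →L[𝕜] E} {N : Submodule 𝕜 E}

lemma adjoint_pow_apply_mem (hN : ∀ x ∈ N, adjoint S x ∈ N) (n : ℕ) {x : E} (hx : x ∈ N) :
    (adjoint S ^ n) x ∈ N := by
  induction n with
  | zero => simpa using hx
  | succ n ih => simpa only [pow_succ', mul_apply_eq_comp] using hN _ ih

variable [N.HasOrthogonalProjection]

lemma inner_compression_pow_apply (hN : ∀ x ∈ N, adjoint S x ∈ N) (n : ℕ) (z y : N) :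
    ⟪z, ((N.orthogonalProjectionOnto ∘L S ∘L N.subtypeL) ^ n) y⟫_𝕜 =
      ⟪(adjoint S ^ n) z, (y : E)⟫_𝕜 := by
  induction n generalizing z with
  | zero => simp
  | succ n ih =>
    rw [pow_succ', mul_apply_eq_comp, comp_apply,
      Submodule.inner_orthogonalProjectionOnto_eq_of_mem_left, comp_apply, ← adjoint_inner_left,
      pow_succ, mul_apply_eq_comp, ← ih ⟨_, hN _ z.2⟩]
    rfl

lemma inner_compression_pow_orthogonalProjectionOnto (hN : ∀ x ∈ N, adjoint S x ∈ N) (n : ℕ)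
    (f : N) (g : E) :
    ⟪f, ((N.orthogonalProjectionOnto ∘L S ∘L N.subtypeL) ^ n) (N.orthogonalProjectionOnto g)⟫_𝕜 =
      ⟪(adjoint S ^ n) f, g⟫_𝕜 := by
  rw [inner_compression_pow_apply hN]
  exact Submodule.inner_orthogonalProjectionOnto_eq_of_mem_left
    ⟨_, adjoint_pow_apply_mem hN n f.2⟩ g

end Compression

section Frame

variable {𝕜 E ι : Type*} [RCLike 𝕜] [NormedAddCommGroup E] [InnerProductSpace 𝕜 E]
  {g : ι → E} {A B : ℝ}

lemma summable_norm_inner_sq_of_lower_frame_bound (hA : 0 < A) {f : E}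
    (hf : A * ‖f‖ ^ 2 ≤ ∑' i, ‖⟪f, g i⟫_𝕜‖ ^ 2) : Summable fun i => ‖⟪f, g i⟫_𝕜‖ ^ 2 := by
  by_contra hns
  rw [tsum_eq_zero_of_not_summable hns] at hf
  obtain rfl : f = 0 := by
    simpa using le_antisymm (nonpos_of_mul_nonpos_right hf hA) (sq_nonneg ‖f‖)
  simp at hns

lemma frame_bounds_tsum_prod {W : Submodule 𝕜 E} (hA : 0 < A)
    (hframe : ∀ f ∈ W, A * ‖f‖ ^ 2 ≤ ∑' i, ‖⟪f, g i⟫_𝕜‖ ^ 2 ∧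
      ∑' i, ‖⟪f, g i⟫_𝕜‖ ^ 2 ≤ B * ‖f‖ ^ 2)
    {w : ℕ → E} (hw : ∀ n, w n ∈ W) {c : ℝ} (hc : HasSum (fun n => ‖w n‖ ^ 2) c) :
    A * c ≤ ∑' p : ι × ℕ, ‖⟪w p.2, g p.1⟫_𝕜‖ ^ 2 ∧
      ∑' p : ι × ℕ, ‖⟪w p.2, g p.1⟫_𝕜‖ ^ 2 ≤ B * c := by
  have hrow n := summable_norm_inner_sq_of_lower_frame_bound hA (hframe _ (hw n)).1
  have hsum : Summable fun n => ∑' i, ‖⟪w n, g i⟫_𝕜‖ ^ 2 :=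
    (hc.summable.mul_left B).of_nonneg_of_le (fun _ => tsum_nonneg fun _ => by positivity)
      fun n => (hframe _ (hw n)).2
  have htot : ∑' p : ι × ℕ, ‖⟪w p.2, g p.1⟫_𝕜‖ ^ 2 = ∑' n, ∑' i, ‖⟪w n, g i⟫_𝕜‖ ^ 2 := by
    have hs : Summable fun q : ℕ × ι => ‖⟪w q.1, g q.2⟫_𝕜‖ ^ 2 :=
      (summable_prod_of_nonneg fun _ => by positivity).2 ⟨hrow, hsum⟩
    rw [← hs.tsum_prod' hrow, ← (Equiv.prodComm ι ℕ).tsum_eq]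
    rfl
  rw [htot]
  exact ⟨hasSum_le (fun n => (hframe _ (hw n)).1) (hc.mul_left A) hsum.hasSum,
    hasSum_le (fun n => (hframe _ (hw n)).2) hsum.hasSum (hc.mul_left B)⟩

end Frame

open scoped ComplexInnerProductSpace

theorem frame_of_iterations_compression_general
    (H : Type*) [NormedAddCommGroup H] [InnerProductSpace ℂ H] [CompleteSpace H]
    (S : H →L[ℂ] H) (hiso : ∀ x : H, ‖S x‖ = ‖x‖)
    (hpure : (⋂ n : ℕ, Set.range (S ^ n)) = ({0} : Set H))
    (N : Submodule ℂ H) [CompleteSpace N]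
    (hNinv : ∀ x ∈ N, ContinuousLinearMap.adjoint S x ∈ N)
    {ι : Type*} (g : ι → H)
    (hg : ∀ i, g i ∈ (LinearMap.range (S : H →ₗ[ℂ] H))ᗮ)
    (A B : ℝ) (hA : 0 < A)
    (hframe : ∀ f ∈ (LinearMap.range (S : H →ₗ[ℂ] H))ᗮ,
      A * ‖f‖ ^ 2 ≤ ∑' i : ι, ‖⟪f, g i⟫‖ ^ 2 ∧
      ∑' i : ι, ‖⟪f, g i⟫‖ ^ 2 ≤ B * ‖f‖ ^ 2) :
    ∀ f : N,
      A * ‖f‖ ^ 2 ≤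
        ∑' p : ι × ℕ,
          ‖⟪f, (((N.orthogonalProjectionOnto) ∘L (S ∘L N.subtypeL)) ^ p.2)
              ((N.orthogonalProjectionOnto) (g p.1))⟫‖ ^ 2 ∧
      ∑' p : ι × ℕ,
          ‖⟪f, (((N.orthogonalProjectionOnto) ∘L (S ∘L N.subtypeL)) ^ p.2)
              ((N.orthogonalProjectionOnto) (g p.1))⟫‖ ^ 2 ≤ B * ‖f‖ ^ 2 := by
  intro f
  have hterm : ∀ p : ι × ℕ,
      ⟪f, (((N.orthogonalProjectionOnto) ∘L (S ∘L N.subtypeL)) ^ p.2)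
        ((N.orthogonalProjectionOnto) (g p.1))⟫ =
      ⟪S.rangeᗮ.starProjection ((adjoint S ^ p.2) f), g p.1⟫ := fun p => by
    rw [inner_compression_pow_orthogonalProjectionOnto hNinv,
      Submodule.inner_starProjection_left_eq_right, Submodule.starProjection_eq_self_iff.2 (hg _)]
  simp_rw [hterm]
  rw [Submodule.coe_norm f]
  exact frame_bounds_tsum_prod hA hframe
    (w := fun n => S.rangeᗮ.starProjection ((adjoint S ^ n) f))
    (fun n => Submodule.starProjection_apply_mem _ _)
    (hasSum_norm_sq_starProjection_wandering hiso hpure f)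

/-- Let `S` be a pure isometry with wandering subspace `W`, let `N`
be a model space (a closed `S*`-invariant subspace) and `A_N = P_N ∘ S |_N` the
compression of `S` to `N`. If `(gᵢ)` is a frame of `W` with bounds `A, B`, then
`{A_Nⁿ (P_N gᵢ)}` is a frame of `N` with the same bounds. -/
theorem frame_of_iterations_compression
    (H : Type*) [NormedAddCommGroup H] [InnerProductSpace ℂ H] [CompleteSpace H]
    (S : H →L[ℂ] H) (hiso : ∀ x : H, ‖S x‖ = ‖x‖)
    (hpure : (⋂ n : ℕ, Set.range (S ^ n)) = ({0} : Set H))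
    (N : Submodule ℂ H) [CompleteSpace N]
    (hNinv : ∀ x ∈ N, ContinuousLinearMap.adjoint S x ∈ N)
    {ι : Type*} (g : ι → H)
    (hg : ∀ i, g i ∈ (LinearMap.range (S : H →ₗ[ℂ] H))ᗮ)
    (A B : ℝ) (hA : 0 < A) (hB : 0 < B)
    (hframe : ∀ f ∈ (LinearMap.range (S : H →ₗ[ℂ] H))ᗮ,
      A * ‖f‖ ^ 2 ≤ ∑' i : ι, ‖⟪f, g i⟫‖ ^ 2 ∧
      ∑' i : ι, ‖⟪f, g i⟫‖ ^ 2 ≤ B * ‖f‖ ^ 2) :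
    ∀ f : N,
      A * ‖f‖ ^ 2 ≤
        ∑' p : ι × ℕ,
          ‖⟪f, (((N.orthogonalProjectionOnto) ∘L (S ∘L N.subtypeL)) ^ p.2)
              ((N.orthogonalProjectionOnto) (g p.1))⟫‖ ^ 2 ∧
      ∑' p : ι × ℕ,
          ‖⟪f, (((N.orthogonalProjectionOnto) ∘L (S ∘L N.subtypeL)) ^ p.2)
              ((N.orthogonalProjectionOnto) (g p.1))⟫‖ ^ 2 ≤ B * ‖f‖ ^ 2 :=
  frame_of_iterations_compression_general H S hiso hpure N hNinv g hg A B hA hframe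
end

section
/- Let H be a complex separable Hilbert space, T a bounded operator on H, m ∈ ℕ, and (v_i)_{i∈Fin m} a finite family in H such that {Tⁿ v_i : i ∈ Fin m, n ≥ 0} is a Parseval frame of H. Then the closure of the range of I − T T* is a finite-dimensional subspace of H of dimension at most m. -/
open scoped ComplexInnerProductSpace

/-!
Splitting off the `n = 0` terms of the Parseval identity and shifting `n` by one, the
identity for `x` becomes `‖x‖² = ∑ᵢ |⟪x, vᵢ⟫|² + ‖T* x‖²`, i.e. `⟪(1 - T T*) x, x⟫` is the
quadratic form of `∑ᵢ vᵢ ⟪vᵢ, ·⟫`. By complex polarization `1 - T T* = ∑ᵢ vᵢ ⟪vᵢ, ·⟫`, so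
the defect space lies in the (closed) span of the `m` vectors `vᵢ`.
-/

open ContinuousLinearMap InnerProductSpace

theorem tsum_prod_nat_eq_sum_add_tsum_succ {ι G : Type*} [Fintype ι] [NormedAddCommGroup G]
    [CompleteSpace G] {f : ι × ℕ → G} (hf : Summable f) :
    ∑' p, f p = ∑ i, f (i, 0) + ∑' p : ι × ℕ, f (p.1, p.2 + 1) := by
  have hsucc : Summable fun p : ι × ℕ => f (p.1, p.2 + 1) :=
    hf.comp_injective (f := f) (i := fun p : ι × ℕ => (p.1, p.2 + 1)) fun p q h => by
      simpa [Prod.ext_iff] using h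
  rw [hf.tsum_prod' hf.prod_factor, hsucc.tsum_prod' hsucc.prod_factor, tsum_fintype,
    tsum_fintype, ← Finset.sum_add_distrib]
  exact Finset.sum_congr rfl fun i _ => (hf.prod_factor i).tsum_eq_zero_add

section ParsevalFrame

variable {H : Type*} [NormedAddCommGroup H] [InnerProductSpace ℂ H]

def IsParsevalFrame {κ : Type*} (x : κ → H) : Prop :=
  ∀ y : H, ∑' k, ‖⟪y, x k⟫‖ ^ 2 = ‖y‖ ^ 2

theorem IsParsevalFrame.summable_norm_inner_sq {κ : Type*} {x : κ → H} (hx : IsParsevalFrame x)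
    (y : H) : Summable fun k => ‖⟪y, x k⟫‖ ^ 2 := by
  by_cases hy : y = 0
  · simp [hy]
  by_contra h
  have hnorm : ‖y‖ ^ 2 = 0 := (hx y).symm.trans (tsum_eq_zero_of_not_summable h)
  exact hy (by simpa using hnorm)

variable [CompleteSpace H] {ι : Type*} [Fintype ι] {T : H →L[ℂ] H} {v : ι → H}

theorem IsParsevalFrame.norm_sq_eq_sum_add_norm_adjoint_sq
    (h : IsParsevalFrame fun p : ι × ℕ => (T ^ p.2) (v p.1)) (x : H) :
    ‖x‖ ^ 2 = ∑ i, ‖⟪x, v i⟫‖ ^ 2 + ‖adjoint T x‖ ^ 2 := by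
  rw [← h x, tsum_prod_nat_eq_sum_add_tsum_succ (h.summable_norm_inner_sq x), ← h (adjoint T x)]
  simp [pow_succ', adjoint_inner_left]

theorem IsParsevalFrame.one_sub_mul_adjoint_eq_sum_rankOne
    (h : IsParsevalFrame fun p : ι × ℕ => (T ^ p.2) (v p.1)) :
    1 - T * adjoint T = ∑ i, rankOne ℂ (v i) (v i) := by
  -- over `ℂ`, an operator is determined by its quadratic form `x ↦ ⟪A x, x⟫`
  rw [← coe_inj, ← ext_inner_map]
  intro x
  have hT : ⟪T (adjoint T x), x⟫ = (‖adjoint T x‖ ^ 2 : ℝ) := by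
    rw [← adjoint_inner_right, inner_self_eq_norm_sq_to_K]; norm_cast
  have hv : ∀ i, ⟪⟪v i, x⟫ • v i, x⟫ = (‖⟪x, v i⟫‖ ^ 2 : ℝ) := by
    intro i
    rw [inner_smul_left, Complex.conj_mul', norm_inner_symm]
    norm_cast
  simp only [coe_coe, sub_apply, one_apply_eq_self, mul_apply_eq_comp,
    sum_apply, rankOne_apply, inner_sub_left, sum_inner, hT, hv, inner_self_eq_norm_sq_to_K]
  have hnorm := congrArg ((↑) : ℝ → ℂ) (h.norm_sq_eq_sum_add_norm_adjoint_sq x)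
  push_cast at hnorm ⊢
  linear_combination hnorm

end ParsevalFrame

theorem InnerProductSpace.range_sum_rankOne_le_span {𝕜 E F ι : Type*} [RCLike 𝕜]
    [SeminormedAddCommGroup E] [NormedSpace 𝕜 E] [SeminormedAddCommGroup F]
    [InnerProductSpace 𝕜 F] [Fintype ι] (v : ι → E) (w : ι → F) :
    LinearMap.range ((∑ i, rankOne 𝕜 (v i) (w i) : F →L[𝕜] E) : F →ₗ[𝕜] E) ≤
      Submodule.span 𝕜 (Set.range v) := by
  rintro _ ⟨x, rfl⟩
  simp only [coe_coe, sum_apply, rankOne_apply]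
  exact Submodule.sum_mem _ fun i _ => Submodule.smul_mem _ _ (Submodule.subset_span ⟨i, rfl⟩)

theorem defect_space_findim_of_finite_parseval_frame_general
    (H : Type*) [NormedAddCommGroup H] [InnerProductSpace ℂ H]
    [CompleteSpace H]
    (T : H →L[ℂ] H) (m : ℕ) (v : Fin m → H)
    (hParseval : ∀ x : H, ∑' p : Fin m × ℕ, ‖⟪x, (T ^ p.2) (v p.1)⟫‖ ^ 2 = ‖x‖ ^ 2) :
    FiniteDimensional ℂ
        ((LinearMap.range ((1 - T * ContinuousLinearMap.adjoint T : H →L[ℂ] H) : H →ₗ[ℂ] H)).topologicalClosure) ∧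
      Module.finrank ℂ
        ((LinearMap.range ((1 - T * ContinuousLinearMap.adjoint T : H →L[ℂ] H) : H →ₗ[ℂ] H)).topologicalClosure) ≤ m := by
  have hrange := range_sum_rankOne_le_span (𝕜 := ℂ) v v
  rw [← IsParsevalFrame.one_sub_mul_adjoint_eq_sum_rankOne hParseval] at hrange
  have := FiniteDimensional.span_of_finite ℂ (Set.finite_range v)
  have hle := Submodule.topologicalClosure_minimal _ hrange
    (Submodule.closed_of_finiteDimensional _)
  have := Submodule.finiteDimensional_of_le hle
  exact ⟨this, (Submodule.finrank_mono hle).trans <|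
    (finrank_range_le_card v).trans_eq (Fintype.card_fin m)⟩

/-- If `{Tⁿ vᵢ : i ∈ Fin m, n ≥ 0}` is a Parseval frame of `H`,
then the closure of the range of `I − T T*` (the defect space) is finite-dimensional
of dimension at most `m`. -/
theorem defect_space_findim_of_finite_parseval_frame
    (H : Type*) [NormedAddCommGroup H] [InnerProductSpace ℂ H]
    [CompleteSpace H] [TopologicalSpace.SeparableSpace H]
    (T : H →L[ℂ] H) (m : ℕ) (v : Fin m → H)
    (hParseval : ∀ x : H, ∑' p : Fin m × ℕ, ‖⟪x, (T ^ p.2) (v p.1)⟫‖ ^ 2 = ‖x‖ ^ 2) :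
    FiniteDimensional ℂ
        ((LinearMap.range ((1 - T * ContinuousLinearMap.adjoint T : H →L[ℂ] H) : H →ₗ[ℂ] H)).topologicalClosure) ∧
      Module.finrank ℂ
        ((LinearMap.range ((1 - T * ContinuousLinearMap.adjoint T : H →L[ℂ] H) : H →ₗ[ℂ] H)).topologicalClosure) ≤ m :=
  defect_space_findim_of_finite_parseval_frame_general H T m v hParseval
end

section
/- Let G be a complex Hilbert space, U a unitary operator on G, H a closed subspace of G with U(H) ⊆ H, and M a closed subspace of H with U(M) ⊆ M. Set N = H ⊖ M (the orthogonal complement of M in H) and W = M ⊖ U(M), and assume the full range condition: N is contained in the closed linear span of {Uᵐ w : m ∈ ℤ, w ∈ W}. Let B : H → H be the compression of U* to H, B f = P_H(U* f), where P_H is the orthogonal projection onto H (in the Hardy space model H = H²_K, G = L²(𝕋,K), U the bilateral shift, B is the backward shift S*). Then for every orthonormal basis (E_i)_{i∈I} of W, the family {Bⁿ(B E_i) : i ∈ I, n ≥ 0} is contained in N and is a Parseval frame of N, i.e., ∑_{i∈I, n≥0} |⟨f, Bⁿ(B E_i)⟩|² = ‖f‖² for all f ∈ N. -/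
/-!
The vectors `Uᵐ Eᵢ` (`m ∈ ℤ`) are orthonormal, since `W ⊥ Uᵈ W` for `d ≠ 0`, and by the full
range condition their closed span contains `N`; hence Parseval's identity holds for `f ∈ N`
over this family. The terms with `m ≥ 0` vanish because `Uᵐ Eᵢ ∈ M ⊥ f`. For `f ∈ H` the
compression satisfies `⟪f, Bⁿ⁺¹ g⟫ = ⟪Uⁿ⁺¹ f, g⟫ = ⟪f, U⁻⁽ⁿ⁺¹⁾ g⟫`, so the remaining terms are
exactly the frame coefficients `⟪f, Bⁿ (B Eᵢ)⟫`.
-/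

open scoped InnerProductSpace ComplexInnerProductSpace

open Submodule

theorem HasSum.comp_negSucc {ι α : Type*} [AddCommMonoid α] [TopologicalSpace α] {f : ℤ × ι → α}
    {a : α} (h : HasSum f a) (hf : ∀ (n : ℕ) (i : ι), f (n, i) = 0) :
    HasSum (fun p : ι × ℕ => f (Int.negSucc p.2, p.1)) a := by
  refine (Function.Injective.hasSum_iff (g := fun p : ι × ℕ => (Int.negSucc p.2, p.1))
    ?_ ?_).mpr h
  · rintro ⟨i, n⟩ ⟨j, k⟩ h
    simp_all
  · rintro ⟨n | n, i⟩ hp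
    · exact hf n i
    · exact absurd ⟨(i, n), rfl⟩ hp

section TopologicalModule

variable {ι R M : Type*} [Semiring R] [AddCommMonoid M] [Module R M] [TopologicalSpace M]

theorem ContinuousLinearEquiv.mapsTo_pow {U : M ≃L[R] M} {s : Set M} (h : Set.MapsTo U s s)
    (n : ℕ) : Set.MapsTo (U ^ n) s s :=
  hom_coe_pow (⇑) rfl (fun _ _ => rfl) U n ▸ h.iterate n

theorem ContinuousLinearMap.mapsTo_pow {B : M →L[R] M} {s : Set M} (h : Set.MapsTo B s s)
    (n : ℕ) : Set.MapsTo (B ^ n) s s :=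
  hom_coe_pow (⇑) rfl (fun _ _ => rfl) B n ▸ h.iterate n

variable [ContinuousAdd M] [ContinuousConstSMul R M]

theorem Submodule.apply_mem_topologicalClosure_span_image {M₂ : Type*} [AddCommMonoid M₂]
    [Module R M₂] [TopologicalSpace M₂] [ContinuousAdd M₂] [ContinuousConstSMul R M₂]
    (T : M →L[R] M₂) {s : Set M} {x : M} (hx : x ∈ (span R s).topologicalClosure) :
    T x ∈ (span R (T '' s)).topologicalClosure := by
  rw [← SetLike.mem_coe, topologicalClosure_coe] at hx ⊢
  exact closure_mono (image_span_subset_span (T : M →ₗ[R] M₂) s)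
    (image_closure_subset_closure_image T.continuous ⟨x, hx, rfl⟩)

theorem topologicalClosure_span_zpow_apply_le {U : M ≃L[R] M} {e : ι → M} :
    (span R {x | ∃ (m : ℤ) (w : M), w ∈ (span R (Set.range e)).topologicalClosure ∧
      x = (U ^ m) w}).topologicalClosure ≤
      (span R (Set.range fun p : ℤ × ι => (U ^ p.1) (e p.2))).topologicalClosure := by
  refine topologicalClosure_minimal _ (span_le.mpr ?_) (isClosed_topologicalClosure _)
  rintro _ ⟨m, w, hw, rfl⟩
  refine topologicalClosure_mono (span_mono ?_)
    (apply_mem_topologicalClosure_span_image ((U ^ m : M ≃L[R] M) : M →L[R] M) hw)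
  rintro _ ⟨_, ⟨i, rfl⟩, rfl⟩
  exact ⟨(m, i), rfl⟩

end TopologicalModule

section InnerProductSpace

variable {ι 𝕜 E : Type*} [RCLike 𝕜] [NormedAddCommGroup E] [InnerProductSpace 𝕜 E]

theorem HilbertBasis.hasSum_norm_inner_sq (b : HilbertBasis ι 𝕜 E) (x : E) :
    HasSum (fun i => ‖⟪b i, x⟫_𝕜‖ ^ 2) (‖x‖ ^ 2) := by
  simpa [b.repr_apply_apply] using lp.hasSum_norm (p := 2) (by norm_num) (b.repr x)

theorem Orthonormal.hasSum_norm_inner_sq_of_mem_topologicalClosure [CompleteSpace E]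
    {v : ι → E} (hv : Orthonormal 𝕜 v) {x : E}
    (hx : x ∈ (span 𝕜 (Set.range v)).topologicalClosure) :
    HasSum (fun i => ‖⟪v i, x⟫_𝕜‖ ^ 2) (‖x‖ ^ 2) := by
  set K := (span 𝕜 (Set.range v)).topologicalClosure
  have : CompleteSpace K := (isClosed_topologicalClosure _).completeSpace_coe
  let v' : ι → K := fun i => ⟨v i, le_topologicalClosure _ (subset_span ⟨i, rfl⟩)⟩
  have hv' : Orthonormal 𝕜 v' := K.subtypeₗᵢ.orthonormal_comp_iff.mp hv
  have hdense : ⊤ ≤ (span 𝕜 (Set.range v')).topologicalClosure := by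
    rw [top_le_iff, ← dense_iff_topologicalClosure_eq_top,
      Topology.IsInducing.subtypeVal.dense_iff]
    intro y
    have himage : K.subtype '' (span 𝕜 (Set.range v') : Set K) = span 𝕜 (Set.range v) := by
      rw [← map_coe, ← span_image, ← Set.range_comp]; rfl
    change (y : E) ∈ closure (K.subtype '' _)
    rw [himage]
    exact y.2
  simpa using (HilbertBasis.mk hv' hdense).hasSum_norm_inner_sq ⟨x, hx⟩

theorem inner_orthogonalProjectionOnto_adjoint_apply [CompleteSpace E] {H : Submodule 𝕜 E}
    [H.HasOrthogonalProjection] (T : E →L[𝕜] E) {x : E} (hx : x ∈ H) (g : E) :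
    ⟪x, (H.orthogonalProjectionOnto (T.adjoint g) : E)⟫_𝕜 = ⟪T x, g⟫_𝕜 :=
  (inner_orthogonalProjectionOnto_eq_of_mem_left ⟨x, hx⟩ _).trans (T.adjoint_inner_right x g)

def wanderingSubspace (U : E ≃L[𝕜] E) (M : Submodule 𝕜 E) : Submodule 𝕜 E :=
  M ⊓ (M.map ((U : E →L[𝕜] E) : E →ₗ[𝕜] E))ᗮ

section Isometry

variable {U : E ≃L[𝕜] E} (hU : ∀ x y, ⟪U x, U y⟫_𝕜 = ⟪x, y⟫_𝕜)
include hU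

theorem inner_zpow_apply_zpow_apply (m : ℤ) (x y : E) :
    ⟪(U ^ m) x, (U ^ m) y⟫_𝕜 = ⟪x, y⟫_𝕜 := by
  let S : Subgroup (E ≃L[𝕜] E) :=
    { carrier := {V | ∀ x y, ⟪V x, V y⟫_𝕜 = ⟪x, y⟫_𝕜}
      mul_mem' := fun hV hV' x y => (hV _ _).trans (hV' x y)
      one_mem' := fun _ _ => rfl
      inv_mem' := fun {V} hV x y => by
        change ⟪V.symm x, V.symm y⟫_𝕜 = _
        rw [← hV, V.apply_symm_apply, V.apply_symm_apply] }
  exact S.zpow_mem hU m x y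

theorem inner_zpow_apply_left (m : ℤ) (x y : E) :
    ⟪(U ^ m) x, y⟫_𝕜 = ⟪x, (U ^ (-m)) y⟫_𝕜 := by
  rw [← inner_zpow_apply_zpow_apply hU m x, zpow_neg]
  congr 1
  exact ((U ^ m).apply_symm_apply y).symm

theorem inner_zpow_apply_eq_zero_of_mem_wanderingSubspace {M : Submodule 𝕜 E}
    (hUM : ∀ x ∈ M, U x ∈ M) {w w' : E} (hw : w ∈ wanderingSubspace U M)
    (hw' : w' ∈ wanderingSubspace U M) {d : ℤ} (hd : d ≠ 0) :
    ⟪w, (U ^ d) w'⟫_𝕜 = 0 := by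
  have hpos : ∀ n : ℕ, n ≠ 0 → ∀ {v v' : E}, v ∈ wanderingSubspace U M →
      v' ∈ wanderingSubspace U M → ⟪(U ^ n) v, v'⟫_𝕜 = 0 := by
    intro n hn v v' hv hv'
    obtain ⟨k, rfl⟩ := Nat.exists_eq_succ_of_ne_zero hn
    rw [pow_succ']
    exact (mem_orthogonal _ _).mp hv'.2 _ (mem_map_of_mem (U.mapsTo_pow hUM k hv.1))
  rcases Int.eq_nat_or_neg d with ⟨n, rfl | rfl⟩
  · rw [← inner_conj_symm, zpow_natCast, hpos n (by simpa using hd) hw' hw, map_zero]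
  · rw [← inner_zpow_apply_left hU, zpow_natCast, hpos n (by simpa using hd) hw hw']

theorem orthonormal_zpow_apply {M : Submodule 𝕜 E} (hUM : ∀ x ∈ M, U x ∈ M) {e : ι → E}
    (he : Orthonormal 𝕜 e) (heW : ∀ i, e i ∈ wanderingSubspace U M) :
    Orthonormal 𝕜 (fun p : ℤ × ι => (U ^ p.1) (e p.2)) := by
  classical
  rw [orthonormal_iff_ite]
  rintro ⟨m, i⟩ ⟨m', j⟩
  have hshift : ⟪(U ^ m) (e i), (U ^ m') (e j)⟫_𝕜 = ⟪e i, (U ^ (m' - m)) (e j)⟫_𝕜 := by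
    rw [inner_zpow_apply_left hU, sub_eq_neg_add, zpow_add]
    rfl
  rw [hshift]
  by_cases hm : m = m'
  · subst hm
    rw [sub_self, zpow_zero]
    change ⟪e i, e j⟫_𝕜 = _
    simpa [Prod.ext_iff] using orthonormal_iff_ite.mp he i j
  · rw [inner_zpow_apply_eq_zero_of_mem_wanderingSubspace hU hUM (heW i) (heW j)
      (sub_ne_zero.mpr (Ne.symm hm))]
    simp [hm]

end Isometry

section Compression

variable {U : E ≃L[𝕜] E} {B : E →L[𝕜] E} {H : Submodule 𝕜 E}
  (hBU : ∀ x ∈ H, ∀ g, ⟪x, B g⟫_𝕜 = ⟪U x, g⟫_𝕜)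
include hBU

theorem inner_pow_apply_eq_inner_pow_apply (hUH : ∀ x ∈ H, U x ∈ H) (n : ℕ) {x : E}
    (hx : x ∈ H) (g : E) : ⟪x, (B ^ n) g⟫_𝕜 = ⟪(U ^ n) x, g⟫_𝕜 := by
  induction n generalizing g with
  | zero => rfl
  | succ n ih =>
    rw [pow_succ, pow_succ']
    exact (ih (B g)).trans (hBU _ (U.mapsTo_pow hUH n hx) g)

theorem apply_mem_inf_orthogonal {M : Submodule 𝕜 E} (hMH : M ≤ H) (hBH : ∀ g, B g ∈ H)
    {x : E} (hx : ∀ u ∈ M, ⟪U u, x⟫_𝕜 = 0) : B x ∈ H ⊓ Mᗮ :=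
  ⟨hBH x, (mem_orthogonal _ _).mpr fun u hu => (hBU u (hMH hu) x).trans (hx u hu)⟩

end Compression

end InnerProductSpace

theorem parseval_frame_backward_shift_of_full_range_general
    (G : Type*) [NormedAddCommGroup G] [InnerProductSpace ℂ G] [CompleteSpace G]
    (U : G ≃L[ℂ] G) (hU : ∀ x y : G, ⟪U x, U y⟫ = ⟪x, y⟫)
    (H M : Submodule ℂ G) [CompleteSpace H]
    (hMH : M ≤ H)
    (hUH : ∀ x ∈ H, U x ∈ H) (hUM : ∀ x ∈ M, U x ∈ M)
    (N W : Submodule ℂ G)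
    (hN : N = H ⊓ Mᗮ)
    (hW : W = M ⊓ (M.map ((U : G →L[ℂ] G) : G →ₗ[ℂ] G))ᗮ)
    (hfullrange : N ≤
      (Submodule.span ℂ {x : G | ∃ (m : ℤ) (w : G), w ∈ W ∧ x = (U ^ m) w}).topologicalClosure)
    (B : G →L[ℂ] G)
    (hB : ∀ f : G,
      B f = (Submodule.orthogonalProjectionOnto H ((ContinuousLinearMap.adjoint (U : G →L[ℂ] G)) f) : G))
    {I : Type*} (E : I → G) (hEW : ∀ i, E i ∈ W) (hON : Orthonormal ℂ E)
    (hspan : (Submodule.span ℂ (Set.range E)).topologicalClosure = W) :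
    (∀ (i : I) (n : ℕ), (B ^ n) (B (E i)) ∈ N) ∧
      ∀ f ∈ N, ∑' p : I × ℕ, ‖⟪f, (B ^ p.2) (B (E p.1))⟫‖ ^ 2 = ‖f‖ ^ 2 := by
  subst hN hW
  have hBU : ∀ x ∈ H, ∀ g, ⟪x, B g⟫ = ⟪U x, g⟫ := fun x hx g => by
    rw [hB]
    exact inner_orthogonalProjectionOnto_adjoint_apply _ hx g
  have hBN : ∀ x, (∀ u ∈ M, ⟪U u, x⟫ = 0) → B x ∈ H ⊓ Mᗮ := fun x =>
    apply_mem_inf_orthogonal hBU hMH fun g => by rw [hB]; exact coe_mem _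
  refine ⟨fun i n => ?_, fun f hf => ?_⟩
  · refine B.mapsTo_pow (fun x hx => hBN x fun u hu => ?_) n (hBN _ fun u hu => ?_)
    · exact (mem_orthogonal _ _).mp hx.2 _ (hUM u hu)
    · exact (mem_orthogonal _ _).mp (hEW i).2 _ (mem_map_of_mem hu)
  have hfF := topologicalClosure_span_zpow_apply_le (hspan ▸ hfullrange hf)
  have hsum := ((orthonormal_zpow_apply hU hUM hON hEW)
    |>.hasSum_norm_inner_sq_of_mem_topologicalClosure hfF).comp_negSucc fun n i => ?_
  · rw [← hsum.tsum_eq]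
    refine tsum_congr fun ⟨i, n⟩ => ?_
    have hterm : ⟪f, (B ^ n) (B (E i))⟫ = ⟪f, (U ^ Int.negSucc n) (E i)⟫ := by
      rw [← mul_apply_eq_comp, ← pow_succ, inner_pow_apply_eq_inner_pow_apply hBU hUH _ hf.1,
        ← zpow_natCast, inner_zpow_apply_left hU, Int.negSucc_eq, Nat.cast_succ]
    rw [hterm, norm_inner_symm]
  · simp [(mem_orthogonal _ _).mp hf.2 _ (U.mapsTo_pow hUM n (hEW i).1)]

/-- Let `U` be a unitary on `G`, `H` a `U`-invariant closed
subspace, `M ⊆ H` a `U`-invariant closed subspace, `N = H ⊖ M`, `W = M ⊖ U(M)`, and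
assume the full range condition `N ⊆ closed span {Uᵐ w : m ∈ ℤ, w ∈ W}`. Let
`B f = P_H (U* f)` be the compression of `U*` to `H`. Then for every orthonormal
basis `(Eᵢ)` of `W`, the family `{Bⁿ (B Eᵢ)}` lies in `N` and is a Parseval frame of
`N`. -/
theorem parseval_frame_backward_shift_of_full_range
    (G : Type*) [NormedAddCommGroup G] [InnerProductSpace ℂ G] [CompleteSpace G]
    (U : G ≃L[ℂ] G) (hU : ∀ x y : G, ⟪U x, U y⟫ = ⟪x, y⟫)
    (H M : Submodule ℂ G) [CompleteSpace H] (hMclosed : IsClosed (M : Set G))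
    (hMH : M ≤ H)
    (hUH : ∀ x ∈ H, U x ∈ H) (hUM : ∀ x ∈ M, U x ∈ M)
    (N W : Submodule ℂ G)
    (hN : N = H ⊓ Mᗮ)
    (hW : W = M ⊓ (M.map ((U : G →L[ℂ] G) : G →ₗ[ℂ] G))ᗮ)
    (hfullrange : N ≤
      (Submodule.span ℂ {x : G | ∃ (m : ℤ) (w : G), w ∈ W ∧ x = (U ^ m) w}).topologicalClosure)
    (B : G →L[ℂ] G)
    (hB : ∀ f : G,
      B f = (Submodule.orthogonalProjectionOnto H ((ContinuousLinearMap.adjoint (U : G →L[ℂ] G)) f) : G))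
    {I : Type*} (E : I → G) (hEW : ∀ i, E i ∈ W) (hON : Orthonormal ℂ E)
    (hspan : (Submodule.span ℂ (Set.range E)).topologicalClosure = W) :
    (∀ (i : I) (n : ℕ), (B ^ n) (B (E i)) ∈ N) ∧
      ∀ f ∈ N, ∑' p : I × ℕ, ‖⟪f, (B ^ p.2) (B (E p.1))⟫‖ ^ 2 = ‖f‖ ^ 2 :=
  parseval_frame_backward_shift_of_full_range_general G U hU H M hMH hUH hUM N W hN hW hfullrange B
    hB E hEW hON hspan
end
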